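/- In a channel-compliant word, the matching relation between send and receive events on a fixed channel (P,Q) is a bijection between the matched sends and the receives: the k-th send event snd(P,Q,_) is matched by the k-th receive event rcv(P,Q,_) whenever the latter exists, and each receive event rcv(P,Q,_) matches exactly one send event. -/

import Mathlib

/-! Let the `k`-th send and the `k`-th receive on the channel sit at positions `i` and `j`.
The sends up to `i` and the receives up to `j` both have `k + 1` messages, and by channel
compliance both are prefixes of the full send sequence, so they coincide: the messages agree,
and since the prefix ending at `j` already holds `k + 1` receives it must contain the send at `i`,
whence `i < j`. Conversely, a send matched by the receive at `j` is preceded by exactly `k` sends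
on the channel, so it is the `k`-th one. -/

/-- Events: `snd P Q m` is process `P` sending message `m` to `Q`;
    `rcv P Q m` is process `Q` receiving message `m` from `P`. -/
inductive Ev where
  | snd : ℕ → ℕ → ℕ → Ev
  | rcv : ℕ → ℕ → ℕ → Ev
deriving DecidableEq

/-- Message values of send events on channel (P,Q) in w. -/
def sends (w : List Ev) (P Q : ℕ) : List ℕ :=
  w.filterMap fun e => match e with
    | .snd p q m => if p = P ∧ q = Q then some m else none
    | _ => none

/-- Message values of receive events on channel (P,Q) in w. -/
def recvs (w : List Ev) (P Q : ℕ) : List ℕ :=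
  w.filterMap fun e => match e with
    | .rcv p q m => if p = P ∧ q = Q then some m else none
    | _ => none

def channelCompliant (w : List Ev) : Prop :=
  ∀ u, u <+: w → ∀ P Q, recvs u P Q <+: sends u P Q

def complete (w : List Ev) : Prop :=
  ∀ P Q, sends w P Q = recvs w P Q

def bounded (B : ℕ) (w : List Ev) : Prop :=
  ∀ u, u <+: w → ∀ P Q, (sends u P Q).length ≤ (recvs u P Q).length + B

def halfDuplex (w : List Ev) : Prop :=
  ∀ u, u <+: w → ∀ P Q,
    sends u P Q = recvs u P Q ∨ sends u Q P = recvs u Q P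

/-- Send at position i on channel (P,Q) is matched by receive at position j. -/
def Matches (w : List Ev) (P Q i j : ℕ) : Prop :=
  i < j ∧ j < w.length ∧
  (∃ m, w[i]? = some (.snd P Q m) ∧ w[j]? = some (.rcv P Q m)) ∧
  sends (w.take (i+1)) P Q = recvs (w.take (j+1)) P Q

def IsSendAt (w : List Ev) (P Q i : ℕ) : Prop := ∃ m, w[i]? = some (Ev.snd P Q m)
def IsRcvAt (w : List Ev) (P Q i : ℕ) : Prop := ∃ m, w[i]? = some (Ev.rcv P Q m)
def MatchedAt (w : List Ev) (P Q i : ℕ) : Prop := ∃ j, Matches w P Q i j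

/-- The process performing the event. -/
def actor : Ev → ℕ
  | .snd p _ _ => p
  | .rcv _ q _ => q

/-- Projection of a word onto the events of process X. -/
def proj (w : List Ev) (X : ℕ) : List Ev := w.filter (fun e => actor e == X)

/-- Two words induce the same MSC (same per-process orders; with FIFO matching,
    this determines the matching). -/
def sameMSC (w v : List Ev) : Prop := ∀ X, proj w X = proj v X

/-- Existentially B-bounded: some linearisation of msc(w) is B-bounded. -/
def existBounded (B : ℕ) (w : List Ev) : Prop :=
  ∃ v, channelCompliant v ∧ sameMSC w v ∧ bounded B v

def isSnd : Ev → Prop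
  | .snd _ _ _ => True
  | _ => False

def isRcv : Ev → Prop
  | .rcv _ _ _ => True
  | _ => False

/-- Positions i and j lie in the same block of the block decomposition. -/
def SameBlock (blocks : List (List Ev)) (i j : ℕ) : Prop :=
  ∃ t, ((blocks.take t).flatten).length ≤ i ∧ j < ((blocks.take (t+1)).flatten).length

/-- w is k-synchronisable: some linearisation of msc(w) splits into blocks of
    at most k sends followed by at most k receives, with matched pairs co-located. -/
def kSynchronisable (k : ℕ) (w : List Ev) : Prop :=
  ∃ blocks : List (List Ev),
    channelCompliant blocks.flatten ∧ sameMSC w blocks.flatten ∧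
    (∀ b ∈ blocks, ∃ s r, b = s ++ r ∧ s.length ≤ k ∧ r.length ≤ k ∧
      (∀ e ∈ s, isSnd e) ∧ (∀ e ∈ r, isRcv e)) ∧
    (∀ P Q i j, Matches blocks.flatten P Q i j → SameBlock blocks i j)

/-- One step of the indistinguishability relation ∼. -/
inductive Sim1 : List Ev → List Ev → Prop
  | ss (u v : List Ev) (P Q R S m m' : ℕ) (h : P ≠ R) :
      Sim1 (u ++ Ev.snd P Q m :: Ev.snd R S m' :: v)
           (u ++ Ev.snd R S m' :: Ev.snd P Q m :: v)
  | rr (u v : List Ev) (P Q R S m m' : ℕ) (h : Q ≠ S) :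
      Sim1 (u ++ Ev.rcv P Q m :: Ev.rcv R S m' :: v)
           (u ++ Ev.rcv R S m' :: Ev.rcv P Q m :: v)
  | sr (u v : List Ev) (P Q R S m m' : ℕ) (h1 : P ≠ S) (h2 : P ≠ R ∨ Q ≠ S) :
      Sim1 (u ++ Ev.snd P Q m :: Ev.rcv R S m' :: v)
           (u ++ Ev.rcv R S m' :: Ev.snd P Q m :: v)
  | srSame (u v : List Ev) (P Q m m' : ℕ)
      (h : (recvs u P Q).length < (sends u P Q).length) :
      Sim1 (u ++ Ev.snd P Q m :: Ev.rcv P Q m' :: v)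
           (u ++ Ev.rcv P Q m' :: Ev.snd P Q m :: v)

/-- The indistinguishability relation ∼ (finitely many swaps). -/
def Sim : List Ev → List Ev → Prop := Relation.ReflTransGen Sim1

def isSndB (P Q : ℕ) : Ev → Bool
  | .snd p q _ => p == P && q == Q
  | _ => false

def isRcvB (P Q : ℕ) : Ev → Bool
  | .rcv p q _ => p == P && q == Q
  | _ => false

/-- Positions of send events on channel (P,Q) in w, in order. -/
def sendPos (w : List Ev) (P Q : ℕ) : List ℕ :=
  (List.range w.length).filter fun i =>
    match w[i]? with
    | some e => isSndB P Q e
    | none => false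

/-- Positions of receive events on channel (P,Q) in w, in order. -/
def rcvPos (w : List Ev) (P Q : ℕ) : List ℕ :=
  (List.range w.length).filter fun i =>
    match w[i]? with
    | some e => isRcvB P Q e
    | none => false

namespace List

variable {α : Type*}

theorem range_prefix_range_of_le {m n : ℕ} (h : m ≤ n) : range m <+: range n := by
  simpa [Nat.min_eq_left h] using take_prefix m (range n)

theorem getElem?_filter_range_eq_some_iff {p : ℕ → Bool} {n k i : ℕ} :
    ((range n).filter p)[k]? = some i ↔ i < n ∧ p i ∧ ((range i).filter p).length = k := by
  have hpos : ∀ {i}, i < n → p i → ((range n).filter p)[((range i).filter p).length]? = some i := by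
    intro i hi hp
    obtain ⟨t, ht⟩ := ((range_prefix_range_of_le hi).filter p)
    rw [← ht, range_succ, filter_append]
    simp [hp]
  constructor
  · intro h
    obtain ⟨hi, hp⟩ := mem_filter.mp (mem_of_getElem? h)
    rw [mem_range] at hi
    refine ⟨hi, hp, ?_⟩
    exact ((getElem?_inj (getElem?_eq_some_iff.mp h).1 (nodup_range.filter p)).mp
      (h.trans (hpos hi hp).symm)).symm
  · rintro ⟨hi, hp, rfl⟩
    exact hpos hi hp

theorem length_filter_range_getElem?_any (w : List α) (q : α → Bool) (i : ℕ) :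
    ((range i).filter fun j => w[j]?.any q).length = (w.take i).countP q := by
  induction i with
  | zero => simp
  | succ i ih =>
    rw [range_succ, filter_append, length_append, ih, take_add_one, countP_append]
    cases h : w[i]? with
    | none => simp [h]
    | some a => cases hq : q a <;> simp [h, hq]

theorem getElem?_filter_range_any_eq_some_iff {w : List α} {q : α → Bool} {k i : ℕ} :
    ((range w.length).filter fun j => w[j]?.any q)[k]? = some i ↔
      (∃ a, w[i]? = some a ∧ q a) ∧ (w.take i).countP q = k := by
  rw [getElem?_filter_range_eq_some_iff, length_filter_range_getElem?_any, Option.any_eq_true]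
  constructor
  · rintro ⟨-, hq, hk⟩
    exact ⟨hq, hk⟩
  · rintro ⟨⟨a, ha, hq⟩, hk⟩
    exact ⟨(getElem?_eq_some_iff.mp ha).1, ⟨a, ha, hq⟩, hk⟩

theorem length_filter_range_any (w : List α) (q : α → Bool) :
    ((range w.length).filter fun j => w[j]?.any q).length = w.countP q := by
  rw [length_filter_range_getElem?_any, take_length]

end List

section Channel

variable {w : List Ev} {P Q i j k m : ℕ}

theorem sendPos_eq (w : List Ev) (P Q : ℕ) :
    sendPos w P Q = (List.range w.length).filter fun i => w[i]?.any (isSndB P Q) := by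
  unfold sendPos
  congr
  funext i
  cases w[i]? <;> rfl

theorem rcvPos_eq (w : List Ev) (P Q : ℕ) :
    rcvPos w P Q = (List.range w.length).filter fun i => w[i]?.any (isRcvB P Q) := by
  unfold rcvPos
  congr
  funext i
  cases w[i]? <;> rfl

theorem isSndB_eq_true_iff {e : Ev} : isSndB P Q e = true ↔ ∃ m, e = .snd P Q m := by
  cases e <;> simp [isSndB, and_comm]

theorem isRcvB_eq_true_iff {e : Ev} : isRcvB P Q e = true ↔ ∃ m, e = .rcv P Q m := by
  cases e <;> simp [isRcvB, and_comm]

theorem length_sends (u : List Ev) (P Q : ℕ) : (sends u P Q).length = u.countP (isSndB P Q) := by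
  rw [sends, List.length_filterMap_eq_countP]
  congr
  funext e
  cases e <;> simp [isSndB, apply_ite, Bool.beq_eq_decide_eq]

theorem length_recvs (u : List Ev) (P Q : ℕ) : (recvs u P Q).length = u.countP (isRcvB P Q) := by
  rw [recvs, List.length_filterMap_eq_countP]
  congr
  funext e
  cases e <;> simp [isRcvB, apply_ite, Bool.beq_eq_decide_eq]

theorem getElem?_sendPos_eq_some_iff :
    (sendPos w P Q)[k]? = some i ↔ IsSendAt w P Q i ∧ (sends (w.take i) P Q).length = k := by
  simp [sendPos_eq, List.getElem?_filter_range_any_eq_some_iff, isSndB_eq_true_iff,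
    length_sends, IsSendAt]

theorem getElem?_rcvPos_eq_some_iff :
    (rcvPos w P Q)[k]? = some i ↔ IsRcvAt w P Q i ∧ (recvs (w.take i) P Q).length = k := by
  simp [rcvPos_eq, List.getElem?_filter_range_any_eq_some_iff, isRcvB_eq_true_iff,
    length_recvs, IsRcvAt]

theorem length_sendPos (w : List Ev) (P Q : ℕ) : (sendPos w P Q).length = (sends w P Q).length := by
  rw [sendPos_eq, List.length_filter_range_any, length_sends]

theorem length_rcvPos (w : List Ev) (P Q : ℕ) : (rcvPos w P Q).length = (recvs w P Q).length := by
  rw [rcvPos_eq, List.length_filter_range_any, length_recvs]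

theorem List.IsPrefix.sends {u v : List Ev} (h : u <+: v) (P Q : ℕ) :
    sends u P Q <+: sends v P Q :=
  h.filterMap _

theorem List.IsPrefix.recvs {u v : List Ev} (h : u <+: v) (P Q : ℕ) :
    recvs u P Q <+: recvs v P Q :=
  h.filterMap _

theorem sends_take_add_one_of_getElem? (h : w[i]? = some (.snd P Q m)) :
    sends (w.take (i + 1)) P Q = sends (w.take i) P Q ++ [m] := by
  simp [List.take_add_one, h, sends, List.filterMap_append]

theorem recvs_take_add_one_of_getElem? (h : w[j]? = some (.rcv P Q m)) :
    recvs (w.take (j + 1)) P Q = recvs (w.take j) P Q ++ [m] := by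
  simp [List.take_add_one, h, recvs, List.filterMap_append]

theorem channelCompliant.sends_take_eq_recvs_take (hw : channelCompliant w) {a b : ℕ}
    (hlen : (sends (w.take a) P Q).length = (recvs (w.take b) P Q).length) :
    sends (w.take a) P Q = recvs (w.take b) P Q := by
  have hS := (w.take_prefix a).sends P Q
  have hR := ((w.take_prefix b).recvs P Q).trans (hw w (List.prefix_refl w) P Q)
  exact (List.prefix_of_prefix_length_le hS hR hlen.le).eq_of_length hlen

theorem matches_of_getElem?_sendPos_of_getElem?_rcvPos (hw : channelCompliant w)
    (hi : (sendPos w P Q)[k]? = some i) (hj : (rcvPos w P Q)[k]? = some j) :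
    Matches w P Q i j := by
  obtain ⟨⟨m, hsnd⟩, hk⟩ := getElem?_sendPos_eq_some_iff.mp hi
  obtain ⟨⟨m', hrcv⟩, hk'⟩ := getElem?_rcvPos_eq_some_iff.mp hj
  have hS := sends_take_add_one_of_getElem? hsnd
  have hR := recvs_take_add_one_of_getElem? hrcv
  have hfifo : sends (w.take (i + 1)) P Q = recvs (w.take (j + 1)) P Q :=
    hw.sends_take_eq_recvs_take (by simp [hS, hR, hk, hk'])
  have hmsg : m = m' := (List.append_singleton_inj.mp (hS ▸ hR ▸ hfifo)).2
  have hij : i < j := by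
    refine lt_of_le_of_ne (not_lt.mp fun hji => ?_) fun hij => ?_
    · have hcompl := (hw _ (w.take_prefix (j + 1)) P Q).length_le
      have hmono :=
        ((List.take_prefix_take_left (l := w) (show j + 1 ≤ i from hji)).sends P Q).length_le
      rw [hR, List.length_append, List.length_singleton] at hcompl
      omega
    · rw [hij, hrcv] at hsnd
      cases hsnd
  exact ⟨hij, (List.getElem?_eq_some_iff.mp hrcv).1, ⟨m, hsnd, hmsg ▸ hrcv⟩, hfifo⟩

theorem getElem?_sendPos_of_matches (hm : Matches w P Q i j)
    (hj : (rcvPos w P Q)[k]? = some j) : (sendPos w P Q)[k]? = some i := by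
  obtain ⟨-, -, ⟨m, hsnd, hrcv⟩, hfifo⟩ := hm
  have hk := (getElem?_rcvPos_eq_some_iff.mp hj).2
  have hlen := congrArg List.length hfifo
  rw [sends_take_add_one_of_getElem? hsnd, recvs_take_add_one_of_getElem? hrcv] at hlen
  simp only [List.length_append, List.length_singleton, hk] at hlen
  exact getElem?_sendPos_eq_some_iff.mpr ⟨⟨m, hsnd⟩, by omega⟩

theorem exists_getElem?_sendPos_of_getElem?_rcvPos (hw : channelCompliant w)
    (hj : (rcvPos w P Q)[k]? = some j) : ∃ i, (sendPos w P Q)[k]? = some i := by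
  have hk : k < (sendPos w P Q).length := by
    have hcompl := (hw w (List.prefix_refl w) P Q).length_le
    have hkr := (List.getElem?_eq_some_iff.mp hj).1
    rw [length_rcvPos] at hkr
    rw [length_sendPos]
    omega
  exact ⟨_, List.getElem?_eq_getElem hk⟩

end Channel

/-- in a channel-compliant word, the k-th send on channel (P,Q)
    is matched by the k-th receive (whenever the latter exists), and each
    receive matches exactly one send. -/
theorem matching_is_bijection (w : List Ev) (P Q : ℕ)
    (h : channelCompliant w) :
    (∀ k i j : ℕ, (sendPos w P Q)[k]? = some i → (rcvPos w P Q)[k]? = some j →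
      Matches w P Q i j) ∧
    (∀ j ∈ rcvPos w P Q, ∃! i, Matches w P Q i j) := by
  refine ⟨fun k i j hi hj => matches_of_getElem?_sendPos_of_getElem?_rcvPos h hi hj,
    fun j hj => ?_⟩
  obtain ⟨k, hk⟩ := List.mem_iff_getElem?.mp hj
  obtain ⟨i, hi⟩ := exists_getElem?_sendPos_of_getElem?_rcvPos h hk
  refine ⟨i, matches_of_getElem?_sendPos_of_getElem?_rcvPos h hi hk, fun i' hi' => ?_⟩
  exact Option.some_injective _ ((getElem?_sendPos_of_matches hi' hk).symm.trans hi)
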